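/- Let char k ≠ 2 and let (R, m) be a local symmetric k-algebra with R/m ≅ k. Then any two nondegenerate associative symmetric bilinear forms on R are homothetic. -/

import Mathlib

/-! Riesz representation for `B` writes `B' r s = B (u * r) s`; symmetry of both forms makes `u`
central, and nondegeneracy of `B'` makes it a unit. In the local algebra `R`, `u = α (1 + n)` with
`α = ε u ≠ 0` and `n` in the nilpotent kernel of `ε`; as `2` is invertible, Newton's method gives a
central unit `v` with `v ^ 2 = 1 + n`, and left multiplication by `v` is the required change of
basis, since central elements are self-adjoint for `B`. -/

/-- Two forms are homothetic if one is obtained from the other by a nonzero scalar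
and a change of basis. -/
def Homothetic {k R : Type*} [Field k] [Ring R] [Algebra k R]
    (B B' : LinearMap.BilinForm k R) : Prop :=
  ∃ α : k, α ≠ 0 ∧ ∃ V : R ≃ₗ[k] R, ∀ r s : R, B' r s = α * B (V r) (V s)

open Polynomial in
theorem exists_isUnit_sq_eq_one_add_of_isNilpotent {A : Type*} [CommRing A]
    (h2 : IsUnit (2 : A)) {n : A} (hn : IsNilpotent n) : ∃ v : A, IsUnit v ∧ v ^ 2 = 1 + n := by
  obtain ⟨v, ⟨hv_nil, hv_root⟩, -⟩ := existsUnique_nilpotent_sub_and_aeval_eq_zero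
    (P := X ^ 2 - C (1 + n)) (x := (1 : A)) (by simpa using hn.neg)
    (by simpa [one_add_one_eq_two] using h2)
  exact ⟨v, by simpa using hv_nil.neg.isUnit_add_one, by simpa [sub_eq_zero] using hv_root⟩

section LocalAlgebra

variable {k R : Type*} [Field k] [Ring R] [Algebra k R] [FiniteDimensional k R]
  {ε : R →ₐ[k] k}

/-- The kernel of `ε` lies in the Jacobson radical, which is nilpotent as `R` is Artinian. -/
theorem isNilpotent_of_algHom_apply_eq_zero (hunit : ∀ x, ε x ≠ 0 → IsUnit x) {x : R}
    (hx : ε x = 0) : IsNilpotent x := by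
  have : IsArtinianRing R := IsArtinianRing.of_finite k R
  have hxJ : x ∈ Ideal.jacobson (⊥ : Ideal R) := by
    refine Ideal.mem_jacobson_iff.mpr fun y => ?_
    obtain ⟨z, hz⟩ := (hunit (y * x + 1) (by simp [hx])).exists_left_inv
    exact ⟨z, by simp [mul_assoc, ← mul_add_one z, hz]⟩
  obtain ⟨n, hn⟩ := IsArtinianRing.isNilpotent_jacobson_bot (R := R)
  exact ⟨n, by simpa [hn] using Ideal.pow_mem_pow hxJ n⟩

theorem exists_mem_center_isUnit_smul_sq_eq (h2 : (2 : k) ≠ 0)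
    (hunit : ∀ x, ε x ≠ 0 → IsUnit x) {u : R} (hu : u ∈ Subalgebra.center k R)
    (hεu : ε u ≠ 0) : ∃ v ∈ Subalgebra.center k R, IsUnit v ∧ u = ε u • v ^ 2 := by
  let n : Subalgebra.center k R := (ε u)⁻¹ • ⟨u, hu⟩ - 1
  have hn : IsNilpotent n := by
    rw [← IsNilpotent.map_iff (f := (Subalgebra.center k R).val) Subtype.val_injective]
    refine isNilpotent_of_algHom_apply_eq_zero hunit ?_
    simp [n, inv_mul_cancel₀ hεu]
  have h2C : IsUnit (2 : Subalgebra.center k R) := by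
    simpa only [map_ofNat] using (Ne.isUnit h2).map (algebraMap k (Subalgebra.center k R))
  obtain ⟨v, hv_unit, hv_sq⟩ := exists_isUnit_sq_eq_one_add_of_isNilpotent h2C hn
  refine ⟨v, v.2, hv_unit.map (Subalgebra.center k R).val, ?_⟩
  rw [add_sub_cancel] at hv_sq
  have := congr_arg (fun w : Subalgebra.center k R => ε u • (w : R)) hv_sq
  simpa [smul_smul, mul_inv_cancel₀ hεu] using this.symm

end LocalAlgebra

namespace LinearMap.BilinForm

section CommRing

variable {k R : Type*} [CommRing k] [Ring R] [Algebra k R] {B B' : LinearMap.BilinForm k R}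

theorem apply_mul_left_of_mem_center (hassoc : ∀ r s t, B (r * s) t = B r (s * t))
    (hsym : ∀ r s, B r s = B s r) {c : R} (hc : c ∈ Subalgebra.center k R) (r s : R) :
    B (c * r) s = B r (c * s) := by
  rw [hassoc, hsym, hassoc, Subalgebra.mem_center_iff.mp hc s]

theorem mem_center_of_apply_eq_apply_mul_left (hnd : B.SeparatingLeft)
    (hassoc : ∀ r s t, B (r * s) t = B r (s * t)) (hsym : ∀ r s, B r s = B s r)
    (hsym' : ∀ r s, B' r s = B' s r) {u : R} (hu : ∀ r s, B' r s = B (u * r) s) :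
    u ∈ Subalgebra.center k R := by
  refine Subalgebra.mem_center_iff.mpr fun r => (sub_eq_zero.mp (hnd _ fun s => ?_)).symm
  rw [LinearMap.map_sub₂, ← hu, hassoc, hsym, ← hu, hsym', sub_self]

end CommRing

section Field

variable {k R : Type*} [Field k] [Ring R] [Algebra k R] [FiniteDimensional k R]
  {B B' : LinearMap.BilinForm k R}

theorem exists_apply_eq_apply_mul_left (hnd : B.Nondegenerate)
    (hassoc : ∀ r s t, B (r * s) t = B r (s * t))
    (hassoc' : ∀ r s t, B' (r * s) t = B' r (s * t)) :
    ∃ u : R, ∀ r s, B' r s = B (u * r) s := by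
  refine ⟨(B.toDual hnd).symm (B' 1), fun r s => ?_⟩
  rw [hassoc, apply_toDual_symm_apply, ← hassoc', one_mul]

theorem isUnit_of_apply_eq_apply_mul_left (hnd' : B'.SeparatingLeft) {u : R}
    (hu : ∀ r s, B' r s = B (u * r) s) : IsUnit u := by
  refine (Algebra.lmul_isUnit_iff (R := k)).mp ((LinearMap.isUnit_iff_ker_eq_bot _).mpr ?_)
  refine LinearMap.ker_eq_bot'.mpr fun r hr => hnd' r fun s => ?_
  rw [hu, show u * r = 0 from hr, map_zero, LinearMap.zero_apply]

end Field

end LinearMap.BilinForm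

open LinearMap.BilinForm in
/-- Let `char k ≠ 2` and `(R, m)` be a local `k`-algebra with `R/m ≅ k` (encoded by
`ε : R →ₐ[k] k` with units exactly the elements outside `m = ker ε`).  Then any two
nondegenerate associative symmetric bilinear forms on `R` are homothetic. -/
theorem stmt9 (k : Type*) [Field k] (h2 : (2 : k) ≠ 0)
    (R : Type*) [Ring R] [Algebra k R] [FiniteDimensional k R]
    (ε : R →ₐ[k] k) (hlocal : ∀ x : R, IsUnit x ↔ ε x ≠ 0)
    (B B' : LinearMap.BilinForm k R)
    (hnd : B.Nondegenerate) (hassoc : ∀ r s t : R, B (r * s) t = B r (s * t))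
    (hsym : ∀ r s : R, B r s = B s r)
    (hnd' : B'.Nondegenerate) (hassoc' : ∀ r s t : R, B' (r * s) t = B' r (s * t))
    (hsym' : ∀ r s : R, B' r s = B' s r) :
    Homothetic B B' := by
  obtain ⟨u, hu⟩ := exists_apply_eq_apply_mul_left hnd hassoc hassoc'
  have hu_center := mem_center_of_apply_eq_apply_mul_left hnd.1 hassoc hsym hsym' hu
  have hεu : ε u ≠ 0 := ((isUnit_of_apply_eq_apply_mul_left hnd'.1 hu).map ε).ne_zero
  obtain ⟨v, hv_center, hv_unit, huv⟩ :=
    exists_mem_center_isUnit_smul_sq_eq h2 (fun x => (hlocal x).2) hu_center hεu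
  refine ⟨ε u, hεu, DistribMulAction.toLinearEquiv k R hv_unit.unit, fun r s => ?_⟩
  have hur : u * r = ε u • (v * (v * r)) := by
    conv_lhs => rw [huv]
    rw [smul_mul_assoc, pow_two, mul_assoc]
  calc B' r s = ε u * B (v * (v * r)) s := by rw [hu, hur, smul_left]
    _ = ε u * B (v * r) (v * s) := by
        rw [apply_mul_left_of_mem_center hassoc hsym hv_center]
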